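/- Operadic compatibility of the tree invariant (Theorem on the morphism of operads): let L be a tree tangle with n strings, L' a tree tangle with m strings, and 1 ≤ i ≤ n. Let L ∘_i L' be the satellite tree tangle with n+m−1 strings obtained by removing a tubular neighborhood of the i-th string of L and gluing in a cylinder containing L', identifying the boundary using the zero framing of the i-th string, with strings reordered appropriately. Then Z(L ∘_i L') = Z(L) ∘_i Z(L') in Dias(n+m−1), where ∘_i : Dias(n) × Dias(m) → Dias(n+m−1) is the bilinear partial composition induced by grafting (substituting a tree for the i-th leaf); equivalently, on the basis described below, e_k^n ∘_i e_l^m = e_{k+m−1}^{n+m−1} if i < k, e_k^n ∘_i e_l^m = e_k^{n+m−1} if i > k, and e_k^n ∘_i e_l^m = e_{k−1+l}^{n+m−1} if i = k. In other words, the map Z from the operad of tree tangles to the diassociative operad Dias is a morphism of operads. -/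

import Mathlib

/-!
Combinatorial Gauss diagrams on `n` strings and the tree invariants `Z I j`.

A Gauss diagram is encoded by a finite set of arrows; each arrow records the
string (an element of `Fin n`) and the position (a rational number, increasing
in the direction of the orientation of the string) of its tail and of its head,
together with a sign `±1`.  Only the induced combinatorial data (linear order of
the endpoints along each string, the tail/head pairing and the signs) is ever
used by the definitions below.

The tree invariant `Z I j G = ∑_{A ∈ 𝒜_{I,j}} sign(A) ⟨A, G⟩` is computed as a
signed count over all subsets `S` of the arrows of `G` that form a planar tree
diagram with leaves on `I` and trunk on `j`: each pair `(A, φ)` of a planar tree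
diagram `A ∈ 𝒜_{I,j}` together with an embedding `φ : A → G` corresponds
bijectively to the subset `S = Im φ` of the arrows of `G`, which is itself a
planar tree diagram with leaves on `I` and trunk on `j`; the contribution of the
pair to the sum is `sign(A) · sign(φ) = (-1)^{#right-pointing arrows of S} · ∏_{a ∈ S} sign(a)`.
-/

open scoped Classical

/-- An arrow of a Gauss diagram on `n` strings: a tail endpoint, a head
endpoint (each given by the string it lies on and its position along that
string) and a sign. -/
structure GArrow (n : ℕ) where
  tailStr : Fin n
  tailPos : ℚ
  headStr : Fin n
  headPos : ℚ
  sign : ℤ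
deriving DecidableEq

namespace GArrow

/-- The two endpoints of an arrow: `false` is the tail, `true` is the head. -/
def ep {n : ℕ} (a : GArrow n) : Bool → Fin n × ℚ
  | false => (a.tailStr, a.tailPos)
  | true => (a.headStr, a.headPos)

end GArrow

/-- A Gauss diagram on `n` strings: a finite set of signed arrows with all
endpoints pairwise distinct, and all signs equal to `±1`. -/
structure GaussDiagram (n : ℕ) where
  arrows : Finset (GArrow n)
  sign_pm : ∀ a ∈ arrows, a.sign = 1 ∨ a.sign = -1
  endpoints_distinct : ∀ a ∈ arrows, ∀ b ∈ arrows, ∀ s t : Bool,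
    a.ep s = b.ep t → a = b ∧ s = t

/-- `S` is a tree diagram with leaves on `I` and trunk on `j`:
* the head and the tail of every arrow lie on different strings;
* for each `i ∈ I` there is exactly one arrow tail on string `i`, and there are
  no arrow tails on strings outside `I`;
* every arrow head lies on a string of `I ∪ {j}`;
* on each string `i ∈ I` all arrow heads precede the unique arrow tail. -/
def IsTreeDiagram {n : ℕ} (I : Finset (Fin n)) (j : Fin n)
    (S : Finset (GArrow n)) : Prop :=
  (∀ a ∈ S, a.tailStr ≠ a.headStr) ∧
  (∀ i ∈ I, ∃! a, a ∈ S ∧ a.tailStr = i) ∧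
  (∀ a ∈ S, a.tailStr ∈ I) ∧
  (∀ a ∈ S, a.headStr ∈ I ∨ a.headStr = j) ∧
  (∀ a ∈ S, ∀ b ∈ S, a.headStr = b.tailStr → a.headPos < b.tailPos)

/-- `ParentRel S s t` : string `s` is the parent of string `t` in the rooted
tree determined by the tree diagram `S`, i.e. the (unique) arrow with tail on
`t` has its head on `s`. -/
def ParentRel {n : ℕ} (S : Finset (GArrow n)) (s t : Fin n) : Prop :=
  ∃ a ∈ S, a.tailStr = t ∧ a.headStr = s

/-- `Descends S s k` : string `k` belongs to the subtree of string `s` (it is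
`s` itself or an iterated child of `s`). -/
def Descends {n : ℕ} (S : Finset (GArrow n)) : Fin n → Fin n → Prop :=
  Relation.ReflTransGen (ParentRel S)

/-- `S` is a *planar* tree diagram with leaves on `I` and trunk on `j`: the
rooted tree `T_S` determined by `S` can be drawn in the plane so that the
clockwise order of its leaves, starting from the root on string `j`, is the
order of the string numbers.  Combinatorially this says that:
* the parent relation makes the strings carrying the arrows into a tree rooted
  at `j` (every leaf string is an iterated child of `j`);
* the whole subtree hanging from an arrow lies on the same side of the string
  carrying the head of that arrow as its tail does;
* two subtrees hanging on the same side of a common string are ordered, along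
  that string, compatibly with the order of the strings: for two arrow heads on
  the same string, with both tails on the left, the subtree attached closer to
  the beginning of the string is the one carrying the larger string numbers,
  while for two tails on the right it is the one carrying the smaller string
  numbers. -/
def IsPlanarTreeDiagram {n : ℕ} (I : Finset (Fin n)) (j : Fin n)
    (S : Finset (GArrow n)) : Prop :=
  IsTreeDiagram I j S ∧
  (∀ i ∈ I, Relation.TransGen (ParentRel S) j i) ∧
  (∀ a ∈ S, ∀ k : Fin n, Descends S a.tailStr k →
    (a.tailStr < a.headStr ↔ k < a.headStr)) ∧
  (∀ a ∈ S, ∀ b ∈ S, a.headStr = b.headStr → a.headPos < b.headPos →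
    ∀ k k' : Fin n, Descends S a.tailStr k → Descends S b.tailStr k' →
      ((a.tailStr < a.headStr → b.tailStr < b.headStr → k' < k) ∧
       (a.headStr < a.tailStr → b.headStr < b.tailStr → k < k')))

/-- The sign `(-1)^q` of an (embedded) arrow diagram, where `q` is the number
of right-pointing arrows (tail on a string of smaller number than the head). -/
noncomputable def treeSign {n : ℕ} (S : Finset (GArrow n)) : ℤ :=
  (-1) ^ (S.filter fun a => a.tailStr < a.headStr).card

/-- The tree invariant `Z_{I,j}(G) = ∑_{A ∈ 𝒜_{I,j}} sign(A)·⟨A,G⟩`, computed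
as the signed count of embedded planar tree diagrams with leaves on `I` and
trunk on `j` inside `G`.  In particular `Z ∅ j G = 1` (only `S = ∅`
contributes). -/
noncomputable def Z {n : ℕ} (I : Finset (Fin n)) (j : Fin n)
    (G : GaussDiagram n) : ℤ :=
  ∑ S ∈ G.arrows.powerset,
    if IsPlanarTreeDiagram I j S then treeSign S * ∏ a ∈ S, a.sign else 0

/-- A strictly increasing squashing map `ℚ → (-1, 1)`, used to re-scale the
positions of endpoints when forming satellites. -/
def squash (q : ℚ) : ℚ := q / (1 + |q|)

/-- Renumbering of the strings of the outer diagram when the `i`-th string of a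
Gauss diagram on `n` strings is replaced by an `m`-string cable whose string
`j'` (the trunk of the inner tree tangle) traverses the whole tube: strings
below `i` keep their number, string `i` goes to the trunk copy `i + j'`, and
strings above `i` are shifted up by `m - 1`. -/
def satStr {n m : ℕ} (i : Fin n) (j' : Fin m) (s : Fin n) : Fin (n + m - 1) :=
  if _h1 : s.val < i.val then
    ⟨s.val, by have := s.isLt; have := i.isLt; have := j'.isLt; omega⟩
  else if _h2 : s.val = i.val then
    ⟨i.val + j'.val, by have := i.isLt; have := j'.isLt; omega⟩
  else
    ⟨s.val + m - 1, by have := s.isLt; have := j'.isLt; omega⟩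

/-- The effect of the satellite operation on an arrow of the outer diagram:
strings are renumbered by `satStr` (endpoints on string `i` land on the trunk
copy), positions are squashed into `(-1, 1)` and the sign is kept. -/
def satArrowG {n m : ℕ} (i : Fin n) (j' : Fin m) (a : GArrow n) :
    GArrow (n + m - 1) :=
  ⟨satStr i j' a.tailStr, squash a.tailPos,
   satStr i j' a.headStr, squash a.headPos, a.sign⟩

/-- The numbering of the cable strings: string `t` of the inner diagram becomes
string `i + t` of the satellite. -/
def satStrCable {n m : ℕ} (i : Fin n) (t : Fin m) : Fin (n + m - 1) :=
  ⟨i.val + t.val, by have := i.isLt; have := t.isLt; omega⟩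

/-- The effect of the satellite operation on an arrow of the inner diagram: the
whole inner diagram is compressed into the initial portion of the tube, so its
endpoint positions (squashed into `(-3, -1)`) precede all endpoints coming from
the outer diagram; the sign is kept.  (With the zero framing no further
crossings appear, since only one string of the inner tangle ends on the bottom
of its cylinder: all other strings can be isotoped off the tube.) -/
def satArrowCable {n m : ℕ} (i : Fin n) (a : GArrow m) : GArrow (n + m - 1) :=
  ⟨satStrCable i a.tailStr, squash a.tailPos - 2,
   satStrCable i a.headStr, squash a.headPos - 2, a.sign⟩

/-- The index map defining the partial composition of Loday's diassociative
operad on the basis `e₁,…,e_n` of `Dias(n)` (here `0`-indexed: `e_k` for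
`k : Fin n` records the position of the trunk leaf of a planar tree):
`e_k ∘ᵢ e_l = e_{k+m-1}` if `i < k`, `e_k ∘ᵢ e_l = e_k` if `i > k`, and
`e_k ∘ᵢ e_l = e_{k+l}` if `i = k`. -/
def diasIdx {n m : ℕ} (i k : Fin n) (l : Fin m) : Fin (n + m - 1) :=
  if i.val < k.val then
    ⟨k.val + m - 1, by have := k.isLt; have := l.isLt; omega⟩
  else if k.val < i.val then
    ⟨k.val, by have := k.isLt; have := l.isLt; omega⟩
  else
    ⟨k.val + l.val, by have := k.isLt; have := l.isLt; omega⟩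

/-- The bilinear partial composition
`∘ᵢ : Dias(n) × Dias(m) → Dias(n+m-1)` of the diassociative operad, with
`Dias(r)` realised as the free ℤ-module `Fin r → ℤ` on the basis `e₁,…,e_r`. -/
def diasComp {n m : ℕ} (x : Fin n → ℤ) (i : Fin n) (y : Fin m → ℤ) :
    Fin (n + m - 1) → ℤ :=
  fun t => ∑ k : Fin n, ∑ l : Fin m, if diasIdx i k l = t then x k * y l else 0

/-- The `Dias(n)`-valued tree invariant of a tree tangle given by a Gauss
diagram `G` on `n` strings with trunk on string `j`: the class in `Dias(n)` of
`Z(L) = ∑_I Z_{I,j}(G)·[T_I]`, whose only contribution in arity `n` comes from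
the trees with leaves on all `n` strings, i.e. `Z_{I,j}(G)·e_j` for
`I = {1,…,n} ∖ {j}` (the class `[T_I]` of such a tree depends only on the
position `j` of its trunk leaf). -/
noncomputable def ZDias {n : ℕ} (G : GaussDiagram n) (j : Fin n) :
    Fin n → ℤ :=
  fun k => if k = j then Z (Finset.univ.erase j) j G else 0


/-!
Every subdiagram `S` of the satellite is uniquely `satSet i j' T₁ T₂` for subdiagrams `T₁ ⊆ G`,
`T₂ ⊆ G'`, and its sign `treeSign S · ∏ sign` is the product of those of `T₁` and `T₂`. The
heart of the proof is that `S` is a planar tree diagram with leaves on all strings iff `T₁` and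
`T₂` are. The inner diagram lies in the initial part of the tube, before every outer endpoint,
so its tree hangs from the trunk copy of the `i`-th string and its subtrees fill the block of
strings that replaced `i`; comparisons between satellite strings are then read off in `G` after
crushing that block onto `i`, and in `G'` after crushing everything else onto `j'`. Hence
`Z_{sat} = Z(G) · Z(G')`, and since `ZDias` is a single basis vector at the trunk, the
composition formula is the index identity `diasIdx i j j' = satStr i j' j`.
-/

open Function Relation Finset

lemma squash_strictMono : StrictMono squash := by
  intro q r h
  unfold squash
  rw [div_lt_div_iff₀ (by positivity) (by positivity)]
  rcases abs_cases q with ⟨hq, hq'⟩ | ⟨hq, hq'⟩ <;>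
    rcases abs_cases r with ⟨hr, hr'⟩ | ⟨hr, hr'⟩ <;> nlinarith

lemma neg_one_lt_squash (q : ℚ) : -1 < squash q := by
  unfold squash
  rw [lt_div_iff₀ (by positivity)]
  rcases abs_cases q with ⟨hq, hq'⟩ | ⟨hq, hq'⟩ <;> nlinarith

lemma squash_lt_one (q : ℚ) : squash q < 1 := by
  unfold squash
  rw [div_lt_iff₀ (by positivity)]
  rcases abs_cases q with ⟨hq, hq'⟩ | ⟨hq, hq'⟩ <;> nlinarith

lemma squash_sub_two_strictMono : StrictMono (squash · - 2) :=
  fun _ _ h ↦ sub_lt_sub_right (squash_strictMono h) 2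

lemma squash_sub_two_lt_squash (q r : ℚ) : squash q - 2 < squash r := by
  linarith [squash_lt_one q, neg_one_lt_squash r]

namespace GArrow

variable {p q : ℕ}

def map (σ : Fin p → Fin q) (π : ℚ → ℚ) (a : GArrow p) : GArrow q :=
  ⟨σ a.tailStr, π a.tailPos, σ a.headStr, π a.headPos, a.sign⟩

variable {σ : Fin p → Fin q} {π : ℚ → ℚ}

@[simp] lemma map_tailStr (a : GArrow p) : (a.map σ π).tailStr = σ a.tailStr := rfl
@[simp] lemma map_headStr (a : GArrow p) : (a.map σ π).headStr = σ a.headStr := rfl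

lemma map_injective (hσ : Injective σ) (hπ : Injective π) : Injective (map σ π) := by
  rintro ⟨_, _, _, _, _⟩ ⟨_, _, _, _, _⟩ h
  simp only [map, mk.injEq] at h ⊢
  exact ⟨hσ h.1, hπ h.2.1, hσ h.2.2.1, hπ h.2.2.2.1, h.2.2.2.2⟩

end GArrow

section Conditions

variable {n : ℕ}

def HeadsPrecedeTails (S : Finset (GArrow n)) : Prop :=
  ∀ a ∈ S, ∀ b ∈ S, a.headStr = b.tailStr → a.headPos < b.tailPos

def SubtreesOnSide (S : Finset (GArrow n)) : Prop :=
  ∀ a ∈ S, ∀ k : Fin n, Descends S a.tailStr k → (a.tailStr < a.headStr ↔ k < a.headStr)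

def SubtreesOrdered (S : Finset (GArrow n)) : Prop :=
  ∀ a ∈ S, ∀ b ∈ S, a.headStr = b.headStr → a.headPos < b.headPos →
    ∀ k k' : Fin n, Descends S a.tailStr k → Descends S b.tailStr k' →
      ((a.tailStr < a.headStr → b.tailStr < b.headStr → k' < k) ∧
       (a.headStr < a.tailStr → b.headStr < b.tailStr → k < k'))

/-- The parent relation of `S` is a tree on all the strings, rooted at `j`. -/
def IsRootedTree (j : Fin n) (S : Finset (GArrow n)) : Prop :=
  (∀ s, s ≠ j → ∃! a, a ∈ S ∧ a.tailStr = s) ∧ (∀ a ∈ S, a.tailStr ≠ j) ∧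
    ∀ s, s ≠ j → TransGen (ParentRel S) j s

variable {j : Fin n} {S : Finset (GArrow n)}

/-- A string has at most one parent, so a cycle through `s` can be followed backwards
forever; since everything descends from the root, which has no parent, this is absurd. -/
lemma IsRootedTree.not_transGen_self (h : IsRootedTree j S) (s : Fin n) :
    ¬ TransGen (ParentRel S) s s := by
  obtain ⟨huniq, hroot, hconn⟩ := h
  have parent_cycle : ∀ u v, TransGen (ParentRel S) v v → ParentRel S u v →
      TransGen (ParentRel S) u u := by
    rintro u v hvv ⟨a, ha, rfl, rfl⟩
    obtain ⟨b, hab, ⟨c, hc, hct, rfl⟩⟩ := TransGen.tail'_iff.mp hvv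
    obtain ⟨_, -, hu⟩ := huniq _ (hroot a ha)
    obtain rfl : a = c := (hu a ⟨ha, rfl⟩).trans (hu c ⟨hc, hct⟩).symm
    exact TransGen.head' ⟨a, ha, rfl, rfl⟩ hab
  have root_acyclic : ¬ TransGen (ParentRel S) j j := fun hjj ↦ by
    obtain ⟨-, -, ⟨a, ha, hat, -⟩⟩ := TransGen.tail'_iff.mp hjj
    exact hroot a ha hat
  intro hs
  have hdesc : ReflTransGen (ParentRel S) j s := by
    by_cases hsj : s = j
    · exact hsj ▸ ReflTransGen.refl
    · exact (hconn s hsj).to_reflTransGen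
  induction hdesc with
  | refl => exact root_acyclic hs
  | tail _ hbc ih => exact ih (parent_cycle _ _ hs hbc)

lemma IsRootedTree.not_descends_of_parentRel (h : IsRootedTree j S) {p c : Fin n}
    (hpc : ParentRel S p c) : ¬ Descends S c p :=
  fun hcp ↦ h.not_transGen_self p (TransGen.head' hpc hcp)

lemma isPlanarTreeDiagram_univ_erase_iff :
    IsPlanarTreeDiagram (univ.erase j) j S ↔
      IsRootedTree j S ∧ HeadsPrecedeTails S ∧ SubtreesOnSide S ∧ SubtreesOrdered S := by
  simp only [IsPlanarTreeDiagram, IsTreeDiagram, mem_erase, mem_univ, and_true]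
  constructor
  · rintro ⟨⟨-, huniq, htail, -, hpos⟩, hconn, hside, hord⟩
    exact ⟨⟨huniq, htail, hconn⟩, hpos, hside, hord⟩
  · rintro ⟨hrt, hpos, hside, hord⟩
    refine ⟨⟨fun a ha hloop ↦ ?_, hrt.1, hrt.2.1, fun a _ ↦ ne_or_eq _ _, hpos⟩,
      hrt.2.2, hside, hord⟩
    exact hrt.not_transGen_self _ (TransGen.single ⟨a, ha, rfl, hloop.symm⟩)

end Conditions

section Embedding

variable {p q : ℕ} {σ : Fin p → Fin q} {π : ℚ → ℚ}
  {T : Finset (GArrow p)} {S : Finset (GArrow q)}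

lemma ParentRel.map (hT : T.image (GArrow.map σ π) ⊆ S) {u v : Fin p}
    (h : ParentRel T u v) : ParentRel S (σ u) (σ v) := by
  obtain ⟨a, ha, rfl, rfl⟩ := h
  exact ⟨a.map σ π, hT (mem_image_of_mem _ ha), rfl, rfl⟩

lemma Descends.map (hT : T.image (GArrow.map σ π) ⊆ S) {u v : Fin p}
    (h : Descends T u v) : Descends S (σ u) (σ v) :=
  ReflTransGen.lift σ (fun _ _ ↦ ParentRel.map hT) _ _ h

lemma transGen_parentRel_map (hT : T.image (GArrow.map σ π) ⊆ S) {u v : Fin p}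
    (h : TransGen (ParentRel T) u v) : TransGen (ParentRel S) (σ u) (σ v) :=
  TransGen.lift σ (fun _ _ ↦ ParentRel.map hT) _ _ h

lemma HeadsPrecedeTails.of_image_map (hT : T.image (GArrow.map σ π) ⊆ S)
    (hπ : StrictMono π) (h : HeadsPrecedeTails S) :
    HeadsPrecedeTails T := fun _ ha _ hb hab ↦
  hπ.lt_iff_lt.mp <| h _ (hT (mem_image_of_mem _ ha)) _ (hT (mem_image_of_mem _ hb))
    (congrArg σ hab)

lemma SubtreesOnSide.of_image_map (hT : T.image (GArrow.map σ π) ⊆ S)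
    (hσ : StrictMono σ) (h : SubtreesOnSide S) : SubtreesOnSide T := fun a ha k hk ↦ by
  simpa only [GArrow.map_tailStr, GArrow.map_headStr, hσ.lt_iff_lt] using
    h _ (hT (mem_image_of_mem _ ha)) (σ k) (hk.map hT)

lemma SubtreesOrdered.of_image_map (hT : T.image (GArrow.map σ π) ⊆ S)
    (hσ : StrictMono σ) (hπ : StrictMono π) (h : SubtreesOrdered S) :
    SubtreesOrdered T := fun a ha b hb hab hpos k k' hk hk' ↦ by
  simpa only [GArrow.map_tailStr, GArrow.map_headStr, hσ.lt_iff_lt] using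
    h _ (hT (mem_image_of_mem _ ha)) _ (hT (mem_image_of_mem _ hb)) (congrArg σ hab)
      (hπ hpos) (σ k) (σ k') (hk.map hT) (hk'.map hT)

lemma treeSign_image_map (hσ : StrictMono σ) (hπ : Injective π) :
    treeSign (T.image (GArrow.map σ π)) = treeSign T := by
  unfold treeSign
  rw [filter_image, card_image_of_injective _ (GArrow.map_injective hσ.injective hπ)]
  simp only [GArrow.map_tailStr, GArrow.map_headStr, hσ.lt_iff_lt]

lemma prod_sign_image_map (hσ : Injective σ) (hπ : Injective π) :
    ∏ a ∈ T.image (GArrow.map σ π), a.sign = ∏ a ∈ T, a.sign := by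
  rw [prod_image fun a _ b _ h ↦ GArrow.map_injective hσ hπ h]
  rfl

end Embedding

lemma treeSign_union {n : ℕ} {S S' : Finset (GArrow n)} (h : Disjoint S S') :
    treeSign (S ∪ S') = treeSign S * treeSign S' := by
  unfold treeSign
  rw [filter_union, card_union_of_disjoint (disjoint_filter_filter h), pow_add]

lemma sum_powerset_union_of_disjoint {α M : Type*} [DecidableEq α] [AddCommMonoid M]
    {s t : Finset α} (h : Disjoint s t) (f : Finset α → M) :
    ∑ u ∈ (s ∪ t).powerset, f u = ∑ u ∈ s.powerset, ∑ v ∈ t.powerset, f (u ∪ v) := by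
  have hunion : (s ∪ t).powerset = (s.powerset ×ˢ t.powerset).image fun uv ↦ uv.1 ∪ uv.2 := by
    ext; simp [mem_sups, and_assoc]
  have hsplit : ∀ {u v}, u ⊆ s → v ⊆ t → (u ∪ v) ∩ s = u ∧ (u ∪ v) ∩ t = v := by
    intro u v hu hv
    constructor <;> ext x <;> grind [disjoint_left]
  rw [← sum_product', hunion, sum_image]
  rintro ⟨u, v⟩ huv ⟨u', v'⟩ huv' heq
  simp only [coe_product, Set.mem_prod, mem_coe, mem_powerset] at huv huv' heq
  obtain ⟨hu, hv⟩ := hsplit huv.1 huv.2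
  obtain ⟨hu', hv'⟩ := hsplit huv'.1 huv'.2
  rw [heq] at hu hv
  rw [← hu, ← hv, hu', hv']

lemma sum_powerset_image {α β M : Type*} [DecidableEq β] [AddCommMonoid M] {f : α → β}
    (hf : Injective f) (s : Finset α) (g : Finset β → M) :
    ∑ u ∈ (s.image f).powerset, g u = ∑ u ∈ s.powerset, g (u.image f) := by
  rw [powerset_image, sum_image fun u _ v _ h ↦ image_injective hf h]

section SatelliteStrings

variable {n m : ℕ} (i : Fin n) (j' : Fin m)

lemma satStr_val (s : Fin n) :
    (satStr i j' s).val =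
      if s.val < i.val then s.val else if s.val = i.val then i.val + j'.val else s.val + m - 1 := by
  unfold satStr
  split_ifs <;> rfl

lemma satStrCable_val (t : Fin m) : (satStrCable i t).val = i.val + t.val := rfl

lemma satStr_strictMono : StrictMono (satStr i j') := by
  intro s t h
  have := j'.isLt
  rw [Fin.lt_def] at h ⊢
  rw [satStr_val, satStr_val]
  split_ifs <;> omega

lemma satStrCable_strictMono : StrictMono (satStrCable (m := m) i) := fun _ _ h ↦ by
  rw [Fin.lt_def] at h ⊢
  exact Nat.add_lt_add_left h _

variable {i j'}

lemma satStr_eq_satStrCable_iff {s : Fin n} {t : Fin m} :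
    satStr i j' s = satStrCable i t ↔ s = i ∧ t = j' := by
  have := s.isLt; have := t.isLt
  rw [Fin.ext_iff, Fin.ext_iff, Fin.ext_iff, satStr_val, satStrCable_val]
  split_ifs <;> omega

lemma satStr_self : satStr i j' i = satStrCable i j' :=
  satStr_eq_satStrCable_iff.mpr ⟨rfl, rfl⟩

variable (i j')

/-- `collapseCable i m` retracts the strings of the satellite onto those of the outer diagram,
crushing the cable onto `i`; `collapseOuter i j'` retracts them onto the cable, crushing every
other string onto the trunk copy `j'`. -/
def collapseCable (m : ℕ) (u : Fin (n + m - 1)) : Fin n :=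
  if _ : u.val < i.val then ⟨u.val, by have := i.isLt; omega⟩
  else if u.val < i.val + m then i
  else ⟨u.val + 1 - m, by have := u.isLt; have := i.isLt; omega⟩

def collapseOuter (u : Fin (n + m - 1)) : Fin m :=
  if _ : i.val ≤ u.val ∧ u.val < i.val + m then ⟨u.val - i.val, by omega⟩ else j'

lemma collapseCable_val (u : Fin (n + m - 1)) :
    (collapseCable i m u).val =
      if u.val < i.val then u.val else if u.val < i.val + m then i.val else u.val + 1 - m := by
  unfold collapseCable
  split_ifs <;> rfl

lemma collapseOuter_val (u : Fin (n + m - 1)) :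
    (collapseOuter i j' u).val =
      if i.val ≤ u.val ∧ u.val < i.val + m then u.val - i.val else j'.val := by
  unfold collapseOuter
  split_ifs <;> rfl

variable {i j'}

@[simp] lemma collapseCable_satStr (s : Fin n) : collapseCable i m (satStr i j' s) = s := by
  have := j'.isLt
  rw [Fin.ext_iff, collapseCable_val, satStr_val]
  split_ifs <;> omega

@[simp] lemma collapseCable_satStrCable (t : Fin m) : collapseCable i m (satStrCable i t) = i := by
  have := t.isLt
  rw [Fin.ext_iff, collapseCable_val, satStrCable_val]
  split_ifs <;> omega

lemma collapseCable_monotone : Monotone (collapseCable i m) := fun u v h ↦ by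
  rw [Fin.le_def] at h ⊢
  rw [collapseCable_val, collapseCable_val]
  split_ifs <;> omega

lemma lt_satStr_iff {v : Fin (n + m - 1)} {s : Fin n} (h : collapseCable i m v ≠ s) :
    v < satStr i j' s ↔ collapseCable i m v < s := by
  have := j'.isLt
  rw [Ne, Fin.ext_iff, collapseCable_val] at h
  rw [Fin.lt_def, Fin.lt_def, satStr_val, collapseCable_val]
  split_ifs at h ⊢ <;> omega

@[simp] lemma collapseOuter_satStr (s : Fin n) : collapseOuter i j' (satStr i j' s) = j' := by
  have := j'.isLt
  rw [Fin.ext_iff, collapseOuter_val, satStr_val]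
  split_ifs <;> omega

@[simp] lemma collapseOuter_satStrCable (t : Fin m) : collapseOuter i j' (satStrCable i t) = t := by
  have := t.isLt
  rw [Fin.ext_iff, collapseOuter_val, satStrCable_val]
  split_ifs <;> omega

variable (i j')

lemma eq_satStr_or_eq_satStrCable (u : Fin (n + m - 1)) :
    (∃ s, u = satStr i j' s) ∨ ∃ t, t ≠ j' ∧ u = satStrCable i t := by
  have := u.isLt; have := i.isLt; have := j'.isLt
  by_cases hin : i.val ≤ u.val ∧ u.val < i.val + m ∧ u.val ≠ i.val + j'.val
  · refine Or.inr ⟨⟨u.val - i.val, by omega⟩, fun h ↦ ?_, ?_⟩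
    · rw [Fin.ext_iff] at h; simp only at h; omega
    · rw [Fin.ext_iff, satStrCable_val]; simp only; omega
  · refine Or.inl ⟨collapseCable i m u, ?_⟩
    rw [Fin.ext_iff, satStr_val, collapseCable_val]
    split_ifs <;> omega

end SatelliteStrings

section SatelliteArrows

variable {n m : ℕ} {i : Fin n} {j' : Fin m}

lemma satArrowG_eq_map : satArrowG i j' = GArrow.map (satStr i j') squash := rfl

lemma satArrowCable_eq_map :
    satArrowCable (m := m) i = GArrow.map (satStrCable i) (squash · - 2) := rfl

lemma satArrowG_injective : Injective (satArrowG i j') :=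
  GArrow.map_injective (satStr_strictMono i j').injective squash_strictMono.injective

lemma satArrowCable_injective : Injective (satArrowCable (m := m) i) :=
  GArrow.map_injective (satStrCable_strictMono i).injective
    squash_sub_two_strictMono.injective

lemma satArrowG_ne_satArrowCable (x : GArrow n) (y : GArrow m) :
    satArrowG i j' x ≠ satArrowCable i y := fun h ↦
  (squash_sub_two_lt_squash y.tailPos x.tailPos).ne' (congrArg GArrow.tailPos h)

variable (i j')

def satSet (T₁ : Finset (GArrow n)) (T₂ : Finset (GArrow m)) : Finset (GArrow (n + m - 1)) :=
  T₁.image (satArrowG i j') ∪ T₂.image (satArrowCable i)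

variable {i j'} {T₁ : Finset (GArrow n)} {T₂ : Finset (GArrow m)}

lemma disjoint_image_satArrowG_satArrowCable :
    Disjoint (T₁.image (satArrowG i j')) (T₂.image (satArrowCable i)) := by
  simp only [disjoint_left, mem_image]
  rintro _ ⟨x, -, rfl⟩ ⟨y, -, hyx⟩
  exact satArrowG_ne_satArrowCable x y hyx.symm

lemma image_satArrowG_subset_satSet :
    T₁.image (GArrow.map (satStr i j') squash) ⊆ satSet i j' T₁ T₂ :=
  subset_union_left

lemma image_satArrowCable_subset_satSet :
    T₂.image (GArrow.map (satStrCable i) (squash · - 2)) ⊆ satSet i j' T₁ T₂ :=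
  subset_union_right

lemma satArrowG_mem_satSet {x : GArrow n} (hx : x ∈ T₁) : satArrowG i j' x ∈ satSet i j' T₁ T₂ :=
  image_satArrowG_subset_satSet (mem_image_of_mem _ hx)

lemma satArrowCable_mem_satSet {y : GArrow m} (hy : y ∈ T₂) :
    satArrowCable i y ∈ satSet i j' T₁ T₂ :=
  image_satArrowCable_subset_satSet (mem_image_of_mem _ hy)

lemma parentRel_satSet_iff {u v : Fin (n + m - 1)} :
    ParentRel (satSet i j' T₁ T₂) u v ↔
      (∃ x ∈ T₁, v = satStr i j' x.tailStr ∧ u = satStr i j' x.headStr) ∨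
      ∃ y ∈ T₂, v = satStrCable i y.tailStr ∧ u = satStrCable i y.headStr := by
  simp only [ParentRel, satSet, mem_union, mem_image]
  constructor
  · rintro ⟨a, ⟨x, hx, rfl⟩ | ⟨y, hy, rfl⟩, rfl, rfl⟩
    exacts [Or.inl ⟨x, hx, rfl, rfl⟩, Or.inr ⟨y, hy, rfl, rfl⟩]
  · rintro (⟨x, hx, rfl, rfl⟩ | ⟨y, hy, rfl, rfl⟩)
    exacts [⟨_, Or.inl ⟨x, hx, rfl⟩, rfl, rfl⟩, ⟨_, Or.inr ⟨y, hy, rfl⟩, rfl, rfl⟩]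

lemma descends_collapseCable {u v : Fin (n + m - 1)} (h : Descends (satSet i j' T₁ T₂) u v) :
    Descends T₁ (collapseCable i m u) (collapseCable i m v) := by
  refine ReflTransGen.lift' _ (fun u v huv ↦ ?_) _ _ h
  rcases parentRel_satSet_iff.mp huv with ⟨x, hx, rfl, rfl⟩ | ⟨y, -, rfl, rfl⟩
  · simp only [onFun, collapseCable_satStr]
    exact .single ⟨x, hx, rfl, rfl⟩
  · simp only [onFun, collapseCable_satStrCable]
    exact .refl

lemma descends_collapseOuter {u v : Fin (n + m - 1)} (h : Descends (satSet i j' T₁ T₂) u v) :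
    Descends T₂ (collapseOuter i j' u) (collapseOuter i j' v) := by
  refine ReflTransGen.lift' _ (fun u v huv ↦ ?_) _ _ h
  rcases parentRel_satSet_iff.mp huv with ⟨x, -, rfl, rfl⟩ | ⟨y, hy, rfl, rfl⟩
  · simp only [onFun, collapseOuter_satStr]
    exact .refl
  · simp only [onFun, collapseOuter_satStrCable]
    exact .single ⟨y, hy, rfl, rfl⟩

lemma descends_of_descends_satStr {s : Fin n} {v : Fin (n + m - 1)}
    (h : Descends (satSet i j' T₁ T₂) (satStr i j' s) v) : Descends T₁ s (collapseCable i m v) := by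
  simpa using descends_collapseCable h

/-- Below a cable string other than the trunk copy `j'`, the satellite stays in the cable. -/
lemma descends_of_descends_satStrCable (h2 : ∀ y ∈ T₂, y.tailStr ≠ j') {t : Fin m} (ht : t ≠ j')
    {v : Fin (n + m - 1)} (h : Descends (satSet i j' T₁ T₂) (satStrCable i t) v) :
    v = satStrCable i (collapseOuter i j' v) ∧ Descends T₂ t (collapseOuter i j' v) := by
  refine ⟨?_, by simpa using descends_collapseOuter h⟩
  suffices ∃ t', t' ≠ j' ∧ v = satStrCable i t' by
    obtain ⟨t', -, rfl⟩ := this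
    rw [collapseOuter_satStrCable]
  induction h with
  | refl => exact ⟨t, ht, rfl⟩
  | tail _ hbc ih =>
    obtain ⟨t', ht', rfl⟩ := ih
    rcases parentRel_satSet_iff.mp hbc with ⟨x, -, -, hx⟩ | ⟨y, hy, rfl, -⟩
    · exact absurd (satStr_eq_satStrCable_iff.mp hx.symm).2 ht'
    · exact ⟨y.tailStr, h2 y hy, rfl⟩

end SatelliteArrows

lemma existsUnique_mem_image_union_iff {α β : Type*} [DecidableEq β] {f : α → β}
    (hf : Injective f) {s : Finset α} {u : Finset β} {p : β → Prop} (hu : ∀ b ∈ u, ¬ p b) :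
    (∃! b, b ∈ s.image f ∪ u ∧ p b) ↔ ∃! a, a ∈ s ∧ p (f a) := by
  have mem_image_of_mem_union : ∀ {b}, b ∈ s.image f ∪ u → p b → ∃ a ∈ s, f a = b :=
    fun hb hpb ↦ mem_image.mp ((mem_union.mp hb).resolve_right fun hbu ↦ hu _ hbu hpb)
  constructor
  · rintro ⟨b, ⟨hb, hpb⟩, huniq⟩
    obtain ⟨a, ha, rfl⟩ := mem_image_of_mem_union hb hpb
    exact ⟨a, ⟨ha, hpb⟩, fun a' ha' ↦
      hf (huniq _ ⟨mem_union_left _ (mem_image_of_mem _ ha'.1), ha'.2⟩)⟩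
  · rintro ⟨a, ⟨ha, hpa⟩, huniq⟩
    refine ⟨f a, ⟨mem_union_left _ (mem_image_of_mem _ ha), hpa⟩, fun b ⟨hb, hpb⟩ ↦ ?_⟩
    obtain ⟨a', ha', rfl⟩ := mem_image_of_mem_union hb hpb
    rw [huniq a' ⟨ha', hpb⟩]

section RootedTree

variable {n m : ℕ} {i : Fin n} {j' : Fin m} {j : Fin n}
  {T₁ : Finset (GArrow n)} {T₂ : Finset (GArrow m)}

lemma existsUnique_tailStr_satStr_iff (h2 : ∀ y ∈ T₂, y.tailStr ≠ j') (s : Fin n) :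
    (∃! a, a ∈ satSet i j' T₁ T₂ ∧ a.tailStr = satStr i j' s) ↔
      ∃! x, x ∈ T₁ ∧ x.tailStr = s := by
  rw [satSet, existsUnique_mem_image_union_iff satArrowG_injective]
  · simp only [satArrowG_eq_map, GArrow.map_tailStr, (satStr_strictMono i j').injective.eq_iff]
  · simp only [mem_image]
    rintro _ ⟨y, hy, rfl⟩ h
    exact h2 y hy (satStr_eq_satStrCable_iff.mp h.symm).2

lemma existsUnique_tailStr_satStrCable_iff {t : Fin m} (ht : t ≠ j') :
    (∃! a, a ∈ satSet i j' T₁ T₂ ∧ a.tailStr = satStrCable i t) ↔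
      ∃! y, y ∈ T₂ ∧ y.tailStr = t := by
  rw [satSet, union_comm, existsUnique_mem_image_union_iff satArrowCable_injective]
  · simp only [satArrowCable_eq_map, GArrow.map_tailStr,
      (satStrCable_strictMono i).injective.eq_iff]
  · simp only [mem_image]
    rintro _ ⟨x, -, rfl⟩ h
    exact ht (satStr_eq_satStrCable_iff.mp h).2

/-- If a cable arrow started on the trunk copy `j'`, it would be the parent arrow of `satStr i`;
then no arrow leaves the cable upwards, and the trunk `satStr j` could not be an ancestor of it. -/
lemma tailStr_ne_of_isRootedTree_satSet
    (h : IsRootedTree (satStr i j' j) (satSet i j' T₁ T₂)) : ∀ y ∈ T₂, y.tailStr ≠ j' := by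
  obtain ⟨huniq, hroot, hconn⟩ := h
  intro y hy hyj
  have hyS : satArrowCable i y ∈ satSet i j' T₁ T₂ := satArrowCable_mem_satSet hy
  have hytail : (satArrowCable i y).tailStr = satStr i j' i := by
    rw [satStr_self, ← hyj]
    rfl
  have hij : satStr i j' i ≠ satStr i j' j := fun hij ↦ hroot _ hyS (hytail.trans hij)
  obtain ⟨_, -, hunique⟩ := huniq _ hij
  have cable_closed : ∀ u v, ParentRel (satSet i j' T₁ T₂) u v →
      v ∈ Set.range (satStrCable i) → u ∈ Set.range (satStrCable i) := by
    rintro u v huv ⟨t, rfl⟩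
    rcases parentRel_satSet_iff.mp huv with ⟨x, hx, hxt, -⟩ | ⟨y', -, -, rfl⟩
    · have hxi : (satArrowG i j' x).tailStr = satStr i j' i :=
        congrArg (satStr i j') (satStr_eq_satStrCable_iff.mp hxt.symm).1
      exact absurd ((hunique _ ⟨satArrowG_mem_satSet hx, hxi⟩).trans
        (hunique _ ⟨hyS, hytail⟩).symm) (satArrowG_ne_satArrowCable x y)
    · exact ⟨_, rfl⟩
  have trunk_mem : ∀ v, TransGen (ParentRel (satSet i j' T₁ T₂)) (satStr i j' j) v →
      v ∈ Set.range (satStrCable i) → satStr i j' j ∈ Set.range (satStrCable i) := by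
    intro v hv
    induction hv with
    | single h => exact cable_closed _ _ h
    | tail _ hbc ih => exact fun hc ↦ ih (cable_closed _ _ hbc hc)
  obtain ⟨t, ht⟩ := trunk_mem _ (hconn _ hij) ⟨j', satStr_self.symm⟩
  exact hij (by rw [(satStr_eq_satStrCable_iff.mp ht.symm).1])

lemma IsRootedTree.of_satSet (h : IsRootedTree (satStr i j' j) (satSet i j' T₁ T₂)) :
    IsRootedTree j T₁ ∧ IsRootedTree j' T₂ := by
  have h2 := tailStr_ne_of_isRootedTree_satSet h
  obtain ⟨huniq, hroot, hconn⟩ := h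
  have hne : ∀ {t}, t ≠ j' → satStrCable i t ≠ satStr i j' j :=
    fun ht h ↦ ht (satStr_eq_satStrCable_iff.mp h.symm).2
  refine ⟨⟨fun s hs ↦ ?_, fun x hx hxj ↦ ?_, fun s hs ↦ ?_⟩, ⟨fun t ht ↦ ?_, h2, fun t ht ↦ ?_⟩⟩
  · exact (existsUnique_tailStr_satStr_iff h2 s).mp
      (huniq _ ((satStr_strictMono i j').injective.ne hs))
  · exact hroot _ (satArrowG_mem_satSet hx) (congrArg (satStr i j') hxj)
  · have := descends_collapseCable
      (hconn _ ((satStr_strictMono i j').injective.ne hs)).to_reflTransGen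
    simp only [collapseCable_satStr] at this
    exact (reflTransGen_iff_eq_or_transGen.mp this).resolve_left hs
  · exact (existsUnique_tailStr_satStrCable_iff ht).mp (huniq _ (hne ht))
  · have := descends_collapseOuter (hconn _ (hne ht)).to_reflTransGen
    simp only [collapseOuter_satStr, collapseOuter_satStrCable] at this
    exact (reflTransGen_iff_eq_or_transGen.mp this).resolve_left ht

lemma isRootedTree_satSet (h₁ : IsRootedTree j T₁) (h₂ : IsRootedTree j' T₂) :
    IsRootedTree (satStr i j' j) (satSet i j' T₁ T₂) := by
  obtain ⟨huniq₁, hroot₁, hconn₁⟩ := h₁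
  obtain ⟨huniq₂, hroot₂, hconn₂⟩ := h₂
  refine ⟨fun u hu ↦ ?_, ?_, fun u hu ↦ ?_⟩
  · rcases eq_satStr_or_eq_satStrCable i j' u with ⟨s, rfl⟩ | ⟨t, ht, rfl⟩
    · exact (existsUnique_tailStr_satStr_iff hroot₂ s).mpr (huniq₁ s (ne_of_apply_ne _ hu))
    · exact (existsUnique_tailStr_satStrCable_iff ht).mpr (huniq₂ t ht)
  · simp only [satSet, mem_union, mem_image]
    rintro _ (⟨x, hx, rfl⟩ | ⟨y, hy, rfl⟩) h
    · exact hroot₁ x hx ((satStr_strictMono i j').injective h)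
    · exact hroot₂ y hy (satStr_eq_satStrCable_iff.mp h.symm).2
  have trunk_desc : Descends (satSet i j' T₁ T₂) (satStr i j' j) (satStrCable i j') := by
    rw [← satStr_self]
    by_cases hij : i = j
    · rw [hij]
      exact .refl
    · exact (transGen_parentRel_map image_satArrowG_subset_satSet (hconn₁ i hij)).to_reflTransGen
  rcases eq_satStr_or_eq_satStrCable i j' u with ⟨s, rfl⟩ | ⟨t, ht, rfl⟩
  · exact transGen_parentRel_map image_satArrowG_subset_satSet (hconn₁ s (ne_of_apply_ne _ hu))
  · exact TransGen.trans_right trunk_desc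
      (transGen_parentRel_map image_satArrowCable_subset_satSet (hconn₂ t ht))

end RootedTree

section Planarity

variable {n m : ℕ} {i : Fin n} {j' : Fin m} {j : Fin n}
  {T₁ : Finset (GArrow n)} {T₂ : Finset (GArrow m)}

lemma headsPrecedeTails_satSet (h2 : ∀ y ∈ T₂, y.tailStr ≠ j') (h₁ : HeadsPrecedeTails T₁)
    (h₂ : HeadsPrecedeTails T₂) : HeadsPrecedeTails (satSet i j' T₁ T₂) := by
  simp only [HeadsPrecedeTails, satSet, mem_union, mem_image]
  rintro _ (⟨x, hx, rfl⟩ | ⟨y, hy, rfl⟩) _ (⟨x', hx', rfl⟩ | ⟨y', hy', rfl⟩) h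
  · exact squash_strictMono (h₁ x hx x' hx' ((satStr_strictMono i j').injective h))
  · exact absurd (satStr_eq_satStrCable_iff.mp h).2 (h2 y' hy')
  · exact squash_sub_two_lt_squash _ _
  · exact squash_sub_two_strictMono (h₂ y hy y' hy' ((satStrCable_strictMono i).injective h))

lemma subtreesOnSide_satSet (h₁ : IsRootedTree j T₁) (h₂ : IsRootedTree j' T₂)
    (hs₁ : SubtreesOnSide T₁) (hs₂ : SubtreesOnSide T₂) :
    SubtreesOnSide (satSet i j' T₁ T₂) := by
  intro a ha k hk
  rcases mem_union.mp ha with ha | ha <;> obtain ⟨x, hx, rfl⟩ := mem_image.mp ha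
  · have hd := descends_of_descends_satStr hk
    have hne : collapseCable i m k ≠ x.headStr := fun h ↦
      h₁.not_descends_of_parentRel ⟨x, hx, rfl, rfl⟩ (h ▸ hd)
    simp only [satArrowG_eq_map, GArrow.map_tailStr, GArrow.map_headStr]
    rw [(satStr_strictMono i j').lt_iff_lt, lt_satStr_iff hne]
    exact hs₁ x hx _ hd
  · obtain ⟨hk, hd⟩ := descends_of_descends_satStrCable h₂.2.1 (h₂.2.1 x hx) hk
    simp only [satArrowCable_eq_map, GArrow.map_tailStr, GArrow.map_headStr]
    rw [hk, (satStrCable_strictMono i).lt_iff_lt, (satStrCable_strictMono i).lt_iff_lt]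
    exact hs₂ x hx _ hd

/-- A cable subtree and an outer subtree hanging on the same side of the string `satStr i`:
the cable subtree collapses onto `i` itself, the outer one onto a string on that side of `i`. -/
lemma subtreesOrdered_satSet_cable_outer (h₁ : IsRootedTree j T₁) (hs₁ : SubtreesOnSide T₁)
    {x : GArrow n} (hx : x ∈ T₁) (hxi : x.headStr = i) {k k' : Fin (n + m - 1)}
    (hk : collapseCable i m k = i)
    (hk' : Descends (satSet i j' T₁ T₂) (satStr i j' x.tailStr) k') :
    (x.tailStr < x.headStr → k' < k) ∧ (x.headStr < x.tailStr → k < k') := by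
  subst hxi
  have hd := descends_of_descends_satStr hk'
  have hne : collapseCable x.headStr m k' ≠ x.headStr := fun h ↦
    h₁.not_descends_of_parentRel ⟨x, hx, rfl, rfl⟩ (h ▸ hd)
  have hside := hs₁ x hx _ hd
  have hρ : Monotone (collapseCable x.headStr m) := collapseCable_monotone
  refine ⟨fun hlt ↦ hρ.reflect_lt ?_, fun hgt ↦ hρ.reflect_lt ?_⟩
  · rw [hk]
    exact hside.mp hlt
  · rw [hk]
    exact lt_of_le_of_ne (not_lt.mp fun h ↦ (hside.mpr h).not_gt hgt) hne.symm

lemma subtreesOrdered_satSet (h₁ : IsRootedTree j T₁) (h₂ : IsRootedTree j' T₂)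
    (hs₁ : SubtreesOnSide T₁) (ho₁ : SubtreesOrdered T₁) (ho₂ : SubtreesOrdered T₂) :
    SubtreesOrdered (satSet i j' T₁ T₂) := by
  have hσ := satStr_strictMono i j'
  have hτ := satStrCable_strictMono (m := m) i
  intro a ha b hb hab hpos k k' hk hk'
  rcases mem_union.mp ha with ha | ha <;> obtain ⟨x, hx, rfl⟩ := mem_image.mp ha <;>
    rcases mem_union.mp hb with hb | hb <;> obtain ⟨x', hx', rfl⟩ := mem_image.mp hb
  · have := ho₁ x hx x' hx' (hσ.injective hab) (squash_strictMono.lt_iff_lt.mp hpos) _ _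
      (descends_of_descends_satStr hk) (descends_of_descends_satStr hk')
    simp only [satArrowG_eq_map, GArrow.map_tailStr, GArrow.map_headStr, hσ.lt_iff_lt]
    exact ⟨fun h h' ↦ collapseCable_monotone.reflect_lt (this.1 h h'),
      fun h h' ↦ collapseCable_monotone.reflect_lt (this.2 h h')⟩
  · exact absurd hpos (squash_sub_two_lt_squash _ _).not_gt
  · obtain ⟨hk, -⟩ := descends_of_descends_satStrCable h₂.2.1 (h₂.2.1 x hx) hk
    have hxi := (satStr_eq_satStrCable_iff.mp hab.symm).1
    have := subtreesOrdered_satSet_cable_outer h₁ hs₁ hx' hxi (k := k)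
      (by rw [hk, collapseCable_satStrCable]) hk'
    simp only [satArrowG_eq_map, GArrow.map_tailStr, GArrow.map_headStr, hσ.lt_iff_lt]
    exact ⟨fun _ h ↦ this.1 h, fun _ h ↦ this.2 h⟩
  · obtain ⟨hk, hd⟩ := descends_of_descends_satStrCable h₂.2.1 (h₂.2.1 x hx) hk
    obtain ⟨hk', hd'⟩ := descends_of_descends_satStrCable h₂.2.1 (h₂.2.1 x' hx') hk'
    have := ho₂ x hx x' hx' (hτ.injective hab) (squash_sub_two_strictMono.lt_iff_lt.mp hpos)
      _ _ hd hd'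
    simp only [satArrowCable_eq_map, GArrow.map_tailStr, GArrow.map_headStr]
    rw [hk, hk']
    simpa only [hτ.lt_iff_lt] using this

end Planarity

section Invariant

variable {n m : ℕ} {i : Fin n} {j' : Fin m} {j : Fin n}
  {T₁ : Finset (GArrow n)} {T₂ : Finset (GArrow m)}

lemma isPlanarTreeDiagram_satSet_iff :
    IsPlanarTreeDiagram (univ.erase (satStr i j' j)) (satStr i j' j) (satSet i j' T₁ T₂) ↔
      IsPlanarTreeDiagram (univ.erase j) j T₁ ∧ IsPlanarTreeDiagram (univ.erase j') j' T₂ := by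
  simp only [isPlanarTreeDiagram_univ_erase_iff]
  have hσ := satStr_strictMono i j'
  have hτ := satStrCable_strictMono (m := m) i
  constructor
  · rintro ⟨hrt, hpos, hside, hord⟩
    obtain ⟨hrt₁, hrt₂⟩ := hrt.of_satSet
    exact ⟨⟨hrt₁, hpos.of_image_map image_satArrowG_subset_satSet squash_strictMono,
        hside.of_image_map image_satArrowG_subset_satSet hσ,
        hord.of_image_map image_satArrowG_subset_satSet hσ squash_strictMono⟩,
      ⟨hrt₂, hpos.of_image_map image_satArrowCable_subset_satSet squash_sub_two_strictMono,
        hside.of_image_map image_satArrowCable_subset_satSet hτ,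
        hord.of_image_map image_satArrowCable_subset_satSet hτ squash_sub_two_strictMono⟩⟩
  · rintro ⟨⟨hrt₁, hpos₁, hside₁, hord₁⟩, hrt₂, hpos₂, hside₂, hord₂⟩
    exact ⟨isRootedTree_satSet hrt₁ hrt₂, headsPrecedeTails_satSet hrt₂.2.1 hpos₁ hpos₂,
      subtreesOnSide_satSet hrt₁ hrt₂ hside₁ hside₂,
      subtreesOrdered_satSet hrt₁ hrt₂ hside₁ hord₁ hord₂⟩

lemma treeSign_satSet : treeSign (satSet i j' T₁ T₂) = treeSign T₁ * treeSign T₂ := by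
  rw [satSet, treeSign_union disjoint_image_satArrowG_satArrowCable, satArrowG_eq_map,
    satArrowCable_eq_map, treeSign_image_map (satStr_strictMono i j') squash_strictMono.injective,
    treeSign_image_map (satStrCable_strictMono i) squash_sub_two_strictMono.injective]

lemma prod_sign_satSet :
    ∏ a ∈ satSet i j' T₁ T₂, a.sign = (∏ a ∈ T₁, a.sign) * ∏ a ∈ T₂, a.sign := by
  rw [satSet, prod_union disjoint_image_satArrowG_satArrowCable, satArrowG_eq_map,
    satArrowCable_eq_map,
    prod_sign_image_map (satStr_strictMono i j').injective squash_strictMono.injective,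
    prod_sign_image_map (satStrCable_strictMono i).injective squash_sub_two_strictMono.injective]

variable (j) in
/-- The contribution of the subdiagram `S` to `Z (univ.erase j) j`. -/
noncomputable def spanningTreeWeight (S : Finset (GArrow n)) : ℤ :=
  if IsPlanarTreeDiagram (univ.erase j) j S then treeSign S * ∏ a ∈ S, a.sign else 0

lemma spanningTreeWeight_satSet :
    spanningTreeWeight (satStr i j' j) (satSet i j' T₁ T₂) =
      spanningTreeWeight j T₁ * spanningTreeWeight j' T₂ := by
  simp only [spanningTreeWeight, isPlanarTreeDiagram_satSet_iff, treeSign_satSet,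
    prod_sign_satSet]
  by_cases h₁ : IsPlanarTreeDiagram (univ.erase j) j T₁ <;>
    by_cases h₂ : IsPlanarTreeDiagram (univ.erase j') j' T₂ <;>
    simp only [h₁, h₂, and_self, and_false, false_and, if_true, if_false, mul_zero, zero_mul]
  ring

lemma Z_satellite {G : GaussDiagram n} {G' : GaussDiagram m} {Gsat : GaussDiagram (n + m - 1)}
    (hsat : Gsat.arrows =
      (G.arrows.image (satArrowG i j')) ∪ (G'.arrows.image (satArrowCable i))) :
    Z (univ.erase (satStr i j' j)) (satStr i j' j) Gsat =
      Z (univ.erase j) j G * Z (univ.erase j') j' G' := by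
  change ∑ S ∈ _, spanningTreeWeight _ S =
    (∑ S ∈ _, spanningTreeWeight _ S) * ∑ S ∈ _, spanningTreeWeight _ S
  rw [hsat, sum_powerset_union_of_disjoint disjoint_image_satArrowG_satArrowCable,
    sum_powerset_image satArrowG_injective, sum_mul_sum]
  refine sum_congr rfl fun T₁ _ ↦ ?_
  rw [sum_powerset_image satArrowCable_injective]
  exact sum_congr rfl fun T₂ _ ↦ spanningTreeWeight_satSet

end Invariant

lemma ZDias_eq_single {n : ℕ} (G : GaussDiagram n) (j : Fin n) :
    ZDias G j = Pi.single j (Z (univ.erase j) j G) := by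
  funext k
  simp only [ZDias, Pi.single_apply]

lemma diasComp_single {n m : ℕ} (i k : Fin n) (l : Fin m) (a b : ℤ) :
    diasComp (Pi.single k a) i (Pi.single l b) = Pi.single (diasIdx i k l) (a * b) := by
  funext t
  simp only [diasComp, Pi.single_apply, ite_mul, zero_mul, mul_ite, mul_zero]
  rw [sum_eq_single k (fun k' _ hk' ↦ by simp [hk']) (by simp), sum_eq_single l
    (fun l' _ hl' ↦ by simp [hl']) (by simp)]
  simp [eq_comm]

lemma diasIdx_eq_satStr {n m : ℕ} (i j : Fin n) (j' : Fin m) : diasIdx i j j' = satStr i j' j := by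
  have := j.isLt; have := j'.isLt
  rw [Fin.ext_iff, satStr_val, diasIdx]
  split_ifs <;> simp only <;> omega

/-- **Operadic compatibility of the tree invariant: `Z` is a morphism from the
operad of tree tangles to the diassociative operad.**  Let `G` be a Gauss
diagram of a tree tangle `L` on `n` strings with trunk `j`, `G'` a Gauss
diagram of a tree tangle `L'` on `m` strings with trunk `j'`, and let `Gsat` be
the Gauss diagram of the satellite tree tangle `L ∘ᵢ L'` on `n + m - 1` strings
(obtained by gluing a cylinder containing `L'` into a tubular neighborhood of
the `i`-th string of `L` using the zero framing, strings reordered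
appropriately; its trunk is `satStr i j' j`).  Then
`Z(L ∘ᵢ L') = Z(L) ∘ᵢ Z(L')` in `Dias(n+m-1)`; moreover `∘ᵢ` acts on the basis
by `e_k ∘ᵢ e_l = e_{k+m-1}` if `i < k`, `e_k ∘ᵢ e_l = e_k` if `i > k`, and
`e_k ∘ᵢ e_l = e_{k-1+l}` if `i = k`. -/
theorem tree_invariant_operad_morphism {n m : ℕ}
    (G : GaussDiagram n) (j : Fin n) (G' : GaussDiagram m) (j' : Fin m)
    (i : Fin n) (Gsat : GaussDiagram (n + m - 1))
    (hsat : Gsat.arrows =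
      (G.arrows.image (satArrowG i j')) ∪ (G'.arrows.image (satArrowCable i))) :
    ZDias Gsat (satStr i j' j) = diasComp (ZDias G j) i (ZDias G' j') ∧
    (∀ (k : Fin n) (l : Fin m),
      diasComp (Pi.single k 1) i (Pi.single l 1)
        = Pi.single (diasIdx i k l) 1) := by
  refine ⟨?_, fun k l ↦ by rw [diasComp_single, one_mul]⟩
  rw [ZDias_eq_single, ZDias_eq_single, ZDias_eq_single, diasComp_single, diasIdx_eq_satStr,
    Z_satellite hsat]
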